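/- arXiv:2405.09656 — 2 statements merged into one kernel-verified Lean document; each statement's English description precedes it below -/
import Mathlib

section
/- If G is a distance critical simple graph and x, y are vertices of G with d_G(x, y) > 3, then the graph G + xy obtained from G by adding the edge xy is also distance critical. -/
/-!
Distance criticality at `v` is a local condition: it holds exactly when two neighbours of `v`
are at distance at least `3` in `G - v`; otherwise every passage `s - v - t` of a walk can be
replaced by a detour of length at most `2` avoiding `v`. When `v` is an end of the new edge
`xy`, the graph `(G + xy) - v` is just `G - v`. Otherwise a path of length at most `2` between
two neighbours `s`, `t` of `v` in `(G + xy) - v` must use the edge `xy`, so `d(s, x) + d(y, t) ≤ 1`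
(or the same with `x`, `y` swapped), and going through `v` gives `d(x, y) ≤ 3`.
-/

/-- A graph is *distance critical* if for every vertex `v` there is a pair of vertices of
`G − v` whose distance in `G − v` differs from their distance in `G`
(distances are `ℕ∞`-valued, `⊤` when there is no connecting path). -/
def IsDistanceCritical {V : Type*} (G : SimpleGraph V) : Prop :=
  ∀ v : V, ∃ x y : ({v}ᶜ : Set V),
    (G.induce ({v}ᶜ : Set V)).edist x y ≠ G.edist (x : V) (y : V)

/-- The graph obtained from `G` by adding the edge `xy`. -/
def addEdge {V : Type*} (G : SimpleGraph V) (x y : V) : SimpleGraph V :=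
  G ⊔ SimpleGraph.edge x y

open SimpleGraph

namespace SimpleGraph

variable {V V' : Type*} {G : SimpleGraph V} {G' : SimpleGraph V'}

theorem edist_map_le (f : G →g G') (a b : V) : G'.edist (f a) (f b) ≤ G.edist a b :=
  le_sInf <| by
    rintro _ ⟨p, rfl⟩
    simpa using edist_le (p.map f)

theorem edist_le_edist_induce (s : Set V) (a b : s) : G.edist a b ≤ (G.induce s).edist a b :=
  edist_map_le (Embedding.induce s).toHom a b

theorem edist_le_two_of_adj_of_adj {v s t : V} (hs : G.Adj v s) (ht : G.Adj v t) :
    G.edist s t ≤ 2 :=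
  (edist_le (.cons hs.symm (.cons ht .nil))).trans_eq rfl

theorem le_edist_of_le_add_one {f : V → ℕ∞} {b : V} (hb : f b = 0)
    (hf : ∀ a c, G.Adj a c → f a ≤ f c + 1) (a : V) : f a ≤ G.edist a b := by
  have walk_bound {a : V} (p : G.Walk a b) : f a ≤ p.length := by
    induction p with
    | nil => simp [hb]
    | cons h _ ih =>
      rw [Walk.length_cons, Nat.cast_add, Nat.cast_one]
      exact (hf _ _ h).trans (by gcongr; exact ih hb)
  exact le_sInf <| by
    rintro _ ⟨p, rfl⟩
    exact walk_bound p

theorem min_edist_le_edist_sup_edge (x y a b : V) :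
    min (G.edist a b) (min (G.edist a x + 1 + G.edist y b) (G.edist a y + 1 + G.edist x b)) ≤
      (G ⊔ edge x y).edist a b := by
  refine le_edist_of_le_add_one (f := fun a => min (G.edist a b)
    (min (G.edist a x + 1 + G.edist y b) (G.edist a y + 1 + G.edist x b))) (by simp) ?_ a
  intro a c hac
  simp only [← min_add_add_right, le_min_iff]
  have le_add_add_one (s t : ℕ∞) : 1 + t ≤ s + 1 + t + 1 := by
    rw [add_assoc s]
    exact le_add_self.trans le_self_add
  rw [sup_adj, edge_adj] at hac
  rcases hac with hac | ⟨⟨rfl, rfl⟩ | ⟨rfl, rfl⟩, -⟩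
  · have step (z : V) : G.edist a z ≤ G.edist c z + 1 := by
      rw [add_comm, ← edist_eq_one_iff_adj.mpr hac]
      exact G.edist_triangle
    refine ⟨min_le_of_left_le (step b), min_le_of_right_le (min_le_of_left_le ?_),
      min_le_of_right_le (min_le_of_right_le ?_)⟩ <;>
    · rw [add_right_comm _ (G.edist _ b)]
      gcongr
      exact step _
  · simp only [edist_self, zero_add]
    exact ⟨min_le_of_right_le (min_le_of_left_le (add_comm _ _).le),
      min_le_of_right_le (min_le_of_left_le (le_add_add_one _ _)),
      min_le_of_left_le (le_add_self.trans le_self_add)⟩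
  · simp only [edist_self, zero_add]
    exact ⟨min_le_of_right_le (min_le_of_right_le (add_comm _ _).le),
      min_le_of_left_le (le_add_self.trans le_self_add),
      min_le_of_right_le (min_le_of_right_le (le_add_add_one _ _))⟩

theorem induce_sup_edge (s : Set V) {x y : V} (hx : x ∈ s) (hy : y ∈ s) :
    (G ⊔ edge x y).induce s = G.induce s ⊔ edge ⟨x, hx⟩ ⟨y, hy⟩ := by
  ext a b
  simp [edge_adj, Subtype.ext_iff]

theorem induce_sup_edge_of_left_notMem {s : Set V} {x : V} (y : V) (hx : x ∉ s) :
    (G ⊔ edge x y).induce s = G.induce s := by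
  ext ⟨a, ha⟩ ⟨b, hb⟩
  simp only [comap_adj, Function.Embedding.subtype_apply, sup_adj, edge_adj, or_iff_left_iff_imp]
  rintro ⟨⟨rfl, -⟩ | ⟨-, rfl⟩, -⟩ <;> contradiction

theorem edist_induce_compl_le_length {v : V}
    (hv : ∀ s t : ({v}ᶜ : Set V), G.Adj v s → G.Adj v t → (G.induce {v}ᶜ).edist s t ≤ 2)
    {a b : V} (ha : a ∈ ({v}ᶜ : Set V)) (hb : b ∈ ({v}ᶜ : Set V)) (p : G.Walk a b) :
    (G.induce {v}ᶜ).edist ⟨a, ha⟩ ⟨b, hb⟩ ≤ p.length := by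
  induction hn : p.length using Nat.strong_induction_on generalizing a p with
  | _ n ih =>
  cases p with
  | nil => simp
  | @cons _ c _ hac q =>
    by_cases hc : c = v
    · subst c
      cases q with
      | nil => exact absurd hb (by simp)
      | @cons _ t _ hct r =>
        simp only [Walk.length_cons] at hn
        subst hn
        have ht : t ∈ ({v}ᶜ : Set V) := hct.ne'
        calc (G.induce {v}ᶜ).edist ⟨a, ha⟩ ⟨b, hb⟩
            ≤ (G.induce {v}ᶜ).edist ⟨a, ha⟩ ⟨t, ht⟩ + (G.induce {v}ᶜ).edist ⟨t, ht⟩ ⟨b, hb⟩ :=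
              SimpleGraph.edist_triangle
          _ ≤ 2 + r.length := add_le_add (hv ⟨a, ha⟩ ⟨t, ht⟩ hac.symm hct)
              (ih r.length (by omega) ht r rfl)
          _ = ↑(r.length + 1 + 1) := by push_cast; ring
    · simp only [Walk.length_cons] at hn
      subst hn
      have hac' : (G.induce {v}ᶜ).Adj ⟨a, ha⟩ ⟨c, hc⟩ := by simpa using hac
      calc (G.induce {v}ᶜ).edist ⟨a, ha⟩ ⟨b, hb⟩
          ≤ (G.induce {v}ᶜ).edist ⟨a, ha⟩ ⟨c, hc⟩ + (G.induce {v}ᶜ).edist ⟨c, hc⟩ ⟨b, hb⟩ :=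
            SimpleGraph.edist_triangle
        _ ≤ 1 + q.length := add_le_add (edist_eq_one_iff_adj.mpr hac').le
            (ih q.length (by omega) hc q rfl)
        _ = ↑(q.length + 1) := by push_cast; ring

theorem exists_edist_induce_compl_ne_iff {v : V} :
    (∃ a b : ({v}ᶜ : Set V), (G.induce {v}ᶜ).edist a b ≠ G.edist a b) ↔
      ∃ s t : ({v}ᶜ : Set V), G.Adj v s ∧ G.Adj v t ∧ 2 < (G.induce {v}ᶜ).edist s t := by
  constructor
  · contrapose!
    rintro hv ⟨a, ha⟩ ⟨b, hb⟩
    refine le_antisymm (le_sInf ?_) (edist_le_edist_induce _ _ _)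
    rintro _ ⟨p, rfl⟩
    exact edist_induce_compl_le_length hv ha hb p
  · rintro ⟨s, t, hs, ht, hst⟩
    exact ⟨s, t, ((edist_le_two_of_adj_of_adj hs ht).trans_lt hst).ne'⟩

theorem two_lt_edist_add_one_add_edist {v s t x y : V} (hs : G.Adj v s) (ht : G.Adj v t)
    (hxy : 3 < G.edist x y) : 2 < G.edist s x + 1 + G.edist y t := by
  have hle : G.edist x y ≤ G.edist s x + 2 + G.edist y t :=
    calc G.edist x y ≤ G.edist x s + (G.edist s t + G.edist t y) :=
          G.edist_triangle.trans (add_le_add le_rfl G.edist_triangle)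
      _ ≤ G.edist s x + 2 + G.edist y t := by
          rw [← add_assoc, edist_comm (u := x), edist_comm (u := t)]
          gcongr
          exact edist_le_two_of_adj_of_adj hs ht
  have h := hxy.trans_le hle
  rw [show G.edist s x + 2 + G.edist y t = (G.edist s x + 1 + G.edist y t) + 1 by ring,
    show (3 : ℕ∞) = 2 + 1 by norm_num] at h
  exact (ENat.add_lt_add_iff_right ENat.one_ne_top).mp h

end SimpleGraph

theorem isDistanceCritical_iff {V : Type*} (G : SimpleGraph V) :
    IsDistanceCritical G ↔ ∀ v : V, ∃ s t : ({v}ᶜ : Set V),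
      G.Adj v s ∧ G.Adj v t ∧ 2 < (G.induce {v}ᶜ).edist s t :=
  forall_congr' fun _ => exists_edist_induce_compl_ne_iff

theorem stmt_6_general {V : Type*} (G : SimpleGraph V)
    (hG : IsDistanceCritical G) (x y : V) (hd : 3 < G.edist x y) :
    IsDistanceCritical (addEdge G x y) := by
  rw [isDistanceCritical_iff] at hG ⊢
  intro v
  obtain ⟨s, t, hs, ht, hst⟩ := hG v
  refine ⟨s, t, Or.inl hs, Or.inl ht, ?_⟩
  unfold addEdge
  by_cases hvx : v = x
  · subst hvx
    rwa [induce_sup_edge_of_left_notMem y (by simp)]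
  by_cases hvy : v = y
  · subst hvy
    rwa [edge_comm, induce_sup_edge_of_left_notMem x (by simp)]
  rw [induce_sup_edge _ (Ne.symm hvx) (Ne.symm hvy)]
  have via_edge {u w : V} (hu : u ∈ ({v}ᶜ : Set V)) (hw : w ∈ ({v}ᶜ : Set V))
      (huw : 3 < G.edist u w) :
      2 < (G.induce {v}ᶜ).edist s ⟨u, hu⟩ + 1 + (G.induce {v}ᶜ).edist ⟨w, hw⟩ t :=
    (two_lt_edist_add_one_add_edist hs ht huw).trans_le
      (by gcongr <;> exact edist_le_edist_induce _ _ _)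
  calc 2 < min ((G.induce {v}ᶜ).edist s t) (min _ _) :=
        lt_min hst (lt_min (via_edge _ _ hd) (via_edge _ _ (G.edist_comm ▸ hd)))
    _ ≤ _ := min_edist_le_edist_sup_edge _ _ _ _

theorem stmt_6 {V : Type*} [Fintype V] (G : SimpleGraph V)
    (hG : IsDistanceCritical G) (x y : V) (hd : 3 < G.edist x y) :
    IsDistanceCritical (addEdge G x y) :=
  stmt_6_general G hG x y hd
end

section
/- If G and H are distance critical simple graphs, then their tensor product G × H is distance critical; more precisely, every vertex of G × H admits a determining pair. -/
/-- `{a, b}` is a *determining pair* for `v` : `a` and `b` are distinct, nonadjacent,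
and `v` is their unique common neighbor. -/
def IsDeterminingPair {V : Type*} (G : SimpleGraph V) (v a b : V) : Prop :=
  a ≠ b ∧ ¬ G.Adj a b ∧ G.Adj a v ∧ G.Adj b v ∧
    ∀ w : V, G.Adj a w → G.Adj b w → w = v

/-- The tensor (categorical) product of two simple graphs. -/
def tensorProd {α β : Type*} (G : SimpleGraph α) (H : SimpleGraph β) :
    SimpleGraph (α × β) where
  Adj p q := G.Adj p.1 q.1 ∧ H.Adj p.2 q.2
  symm := ⟨fun p q ⟨h1, h2⟩ => ⟨h1.symm, h2.symm⟩⟩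
  loopless := ⟨fun p ⟨h1, _⟩ => G.irrefl h1⟩

namespace SimpleGraph

variable {V : Type*} {G : SimpleGraph V}

lemma Hom.edist_le {W : Type*} {G' : SimpleGraph W} (f : G →g G') (u v : V) :
    G'.edist (f u) (f v) ≤ G.edist u v := by
  by_cases hr : G.Reachable u v
  · obtain ⟨p, hp⟩ := hr.exists_walk_length_eq_edist
    rw [← hp, ← p.length_map f]
    exact SimpleGraph.edist_le _
  · exact edist_eq_top_of_not_reachable hr ▸ le_top

lemma edist_induce_le_length {s : Set V} {u v : V} (p : G.Walk u v)
    (hp : ∀ w ∈ p.support, w ∈ s) :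
    (G.induce s).edist ⟨u, hp u p.start_mem_support⟩ ⟨v, hp v p.end_mem_support⟩ ≤ p.length := by
  have hlen := congrArg Walk.length (p.map_induce hp)
  rw [Walk.length_map] at hlen
  exact hlen ▸ edist_le (p.induce s hp)

namespace Walk

lemma IsPath.exists_split_of_mem_support [DecidableEq V] {x y v : V} {p : G.Walk x y}
    (hp : p.IsPath) (hv : v ∈ p.support) (hxv : x ≠ v) (hvy : v ≠ y) :
    ∃ (a b : V) (q : G.Walk x a) (r : G.Walk b y), G.Adj a v ∧ G.Adj v b ∧
      v ∉ q.support ∧ v ∉ r.support ∧ q.length + r.length + 2 = p.length := by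
  set q := p.takeUntil v hv
  set r := p.dropUntil v hv
  have hq : ¬ q.Nil := not_nil_of_ne hxv
  have hr : ¬ r.Nil := not_nil_of_ne hvy
  refine ⟨q.penultimate, r.snd, q.dropLast, r.tail, q.adj_penultimate hq, r.adj_snd hr,
    ?_, ?_, ?_⟩
  · have hqp : q.IsPath := hp.takeUntil hv
    rw [← q.concat_dropLast (q.adj_penultimate hq)] at hqp
    exact ((concat_isPath_iff _).1 hqp).2
  · have hrp : r.IsPath := hp.dropUntil hv
    rw [← r.cons_tail_eq hr] at hrp
    exact (cons_isPath_iff _ _).1 hrp |>.2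
  · have hspec : q.append r = p := p.take_spec hv
    have := congrArg length hspec
    rw [length_append] at this
    have := q.length_dropLast_add_one hq
    have := r.length_tail_add_one hr
    omega

end Walk

end SimpleGraph

section DeterminingPair

open SimpleGraph

variable {V : Type*} {G : SimpleGraph V}

theorem exists_isDeterminingPair_of_edist_lt_edist_induce {v : V} {x y : ({v}ᶜ : Set V)}
    (hxy : G.edist x y < (G.induce {v}ᶜ).edist x y) : ∃ a b, IsDeterminingPair G v a b := by
  classical
  obtain ⟨p, hp⟩ := exists_walk_of_edist_ne_top hxy.ne_top
  have hpath : p.IsPath := p.isPath_of_length_eq_dist (by simp [SimpleGraph.dist, ← hp])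
  have hv : v ∈ p.support := by
    by_contra hv
    have hle := edist_induce_le_length (s := {v}ᶜ) p fun w hw hwv => hv (hwv ▸ hw)
    exact absurd (hxy.trans_le (hle.trans_eq hp)) (lt_irrefl _)
  obtain ⟨a, b, q, r, hav, hvb, hvq, hvr, hlen⟩ :=
    hpath.exists_split_of_mem_support hv x.2 (Ne.symm y.2)
  have reroute (m : G.Walk a b) (hm : m.length < 2) : False := by
    have hle := SimpleGraph.edist_le (q.append (m.append r))
    rw [← hp] at hle
    simp only [Walk.length_append, Nat.cast_le] at hle
    omega
  have reroute_avoiding (m : G.Walk a b) (hm : m.length ≤ 2) (hvm : v ∉ m.support) : False := by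
    have hle := edist_induce_le_length (s := {v}ᶜ) (q.append (m.append r)) fun w hw hwv => by
      subst hwv
      simp only [Walk.mem_support_append_iff] at hw
      tauto
    rw [← hp] at hxy
    have := hxy.trans_le hle
    simp only [Walk.length_append, Nat.cast_lt] at this
    omega
  refine ⟨a, b, fun hab => ?_, fun hab => reroute hab.toWalk (by simp), hav, hvb.symm,
    fun w haw hbw => ?_⟩
  · subst hab
    exact reroute .nil (by simp)
  · by_contra hwv
    exact reroute_avoiding (.cons haw (.cons hbw.symm .nil)) le_rfl
      (by simp [hav.ne', hvb.ne, Ne.symm hwv])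

theorem IsDeterminingPair.edist_lt_edist_induce {v a b : V} (h : IsDeterminingPair G v a b) :
    G.edist a b < (G.induce {v}ᶜ).edist ⟨a, h.2.2.1.ne⟩ ⟨b, h.2.2.2.1.ne⟩ := by
  obtain ⟨hab, hnadj, hav, hbv, huniq⟩ := h
  rw [edist_eq_two_iff.2 ⟨hab, hnadj, v, hav, hbv⟩, two_lt_edist_iff]
  exact ⟨fun h => hab (congrArg Subtype.val h), hnadj,
    Set.eq_empty_of_forall_notMem fun w hw => w.2 (huniq w hw.1 hw.2)⟩

theorem isDistanceCritical_iff_forall_exists_isDeterminingPair :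
    IsDistanceCritical G ↔ ∀ v, ∃ a b, IsDeterminingPair G v a b := by
  refine ⟨fun hG v => ?_, fun h v => ?_⟩
  · obtain ⟨x, y, hxy⟩ := hG v
    exact exists_isDeterminingPair_of_edist_lt_edist_induce
      (((Embedding.induce _).toHom.edist_le x y).lt_of_ne hxy.symm)
  · obtain ⟨a, b, hab⟩ := h v
    exact ⟨_, _, hab.edist_lt_edist_induce.ne'⟩

theorem IsDeterminingPair.tensorProd {W : Type*} {H : SimpleGraph W} {u a b : V} {w c d : W}
    (hG : IsDeterminingPair G u a b) (hH : IsDeterminingPair H w c d) :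
    IsDeterminingPair (tensorProd G H) (u, w) (a, c) (b, d) := by
  obtain ⟨hab, hnab, hau, hbu, huG⟩ := hG
  obtain ⟨-, -, hcw, hdw, huH⟩ := hH
  exact ⟨fun h => hab (congrArg Prod.fst h), fun h => hnab h.1, ⟨hau, hcw⟩, ⟨hbu, hdw⟩,
    fun p hap hbp => Prod.ext (huG _ hap.1 hbp.1) (huH _ hap.2 hbp.2)⟩

end DeterminingPair

theorem stmt_11_general {α β : Type*}
    (G : SimpleGraph α) (H : SimpleGraph β)
    (hG : IsDistanceCritical G) (hH : IsDistanceCritical H) :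
    IsDistanceCritical (tensorProd G H) ∧
      ∀ p : α × β, ∃ a b : α × β, IsDeterminingPair (tensorProd G H) p a b := by
  have hpairs : ∀ p : α × β, ∃ a b : α × β, IsDeterminingPair (tensorProd G H) p a b := by
    rintro ⟨u, w⟩
    obtain ⟨a, b, hab⟩ := isDistanceCritical_iff_forall_exists_isDeterminingPair.1 hG u
    obtain ⟨c, d, hcd⟩ := isDistanceCritical_iff_forall_exists_isDeterminingPair.1 hH w
    exact ⟨(a, c), (b, d), hab.tensorProd hcd⟩
  exact ⟨isDistanceCritical_iff_forall_exists_isDeterminingPair.2 hpairs, hpairs⟩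

theorem stmt_11 {α β : Type*} [Fintype α] [Fintype β]
    (G : SimpleGraph α) (H : SimpleGraph β)
    (hG : IsDistanceCritical G) (hH : IsDistanceCritical H) :
    IsDistanceCritical (tensorProd G H) ∧
      ∀ p : α × β, ∃ a b : α × β, IsDeterminingPair (tensorProd G H) p a b :=
  stmt_11_general G H hG hH
end
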